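/- arXiv:1903.05858 — 2 statements merged into one kernel-verified Lean document; each statement's English description precedes it below -/
import Mathlib

section
/- For any integer n > 2 and any m < ⌈log₂ n⌉, the monomial x^n on ℝ cannot be represented exactly by a function which is piecewise polynomial with all pieces of degree at most 2^m. In particular, a ReQU network with m hidden layers, m < ⌈log₂ n⌉, cannot represent x^n exactly. -/
/-- `f` is piecewise polynomial on `ℝ` with `k` breakpoints (hence at most `k+1`
pieces), each piece a polynomial of degree at most `D`. -/
def PiecewisePoly (f : ℝ → ℝ) (k D : ℕ) : Prop :=
  ∃ (t : Fin k → ℝ) (p : Fin (k + 1) → Polynomial ℝ),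
    StrictMono t ∧ (∀ i, (p i).natDegree ≤ D) ∧
    ∀ x : ℝ, ∃ i : Fin (k + 1),
      f x = (p i).eval x ∧
      (∀ j : Fin k, (j : ℕ) < (i : ℕ) → t j ≤ x) ∧
      (∀ j : Fin k, (i : ℕ) ≤ (j : ℕ) → x ≤ t j)

theorem stmt_8 (n : ℕ) (hn : 2 < n) (m : ℕ) (hm : m < Nat.clog 2 n) (k : ℕ) :
    ¬ PiecewisePoly (fun x : ℝ => x ^ n) k (2 ^ m) := by
  have hlt : 2 ^ m < n := by
    by_contra h
    push_neg at h
    exact absurd ((Nat.clog_le_iff_le_pow (by norm_num)).mpr h) (Nat.not_le.mpr hm)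
  rintro ⟨t, p, -, hdeg, hpt⟩
  obtain ⟨M, hM⟩ := Finset.exists_le ((Finset.univ : Finset (Fin k)).image t)
  have key : ∀ x : ℝ, M < x → x ^ n = (p (Fin.last k)).eval x := by
    intro x hx
    obtain ⟨i, hfx, -, hup⟩ := hpt x
    have hi : i = Fin.last k := by
      by_contra hne
      have hik : (i : ℕ) < k := lt_of_le_of_ne (Nat.lt_succ_iff.mp i.isLt)
        (fun h => hne (Fin.ext h))
      have := hup ⟨i, hik⟩ (le_refl _)
      have : x ≤ M := le_trans this (hM _ (Finset.mem_image_of_mem t (Finset.mem_univ _)))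
      linarith
    rw [hi] at hfx
    exact hfx
  have hzero : (Polynomial.X ^ n - p (Fin.last k) : Polynomial ℝ) = 0 := by
    apply Polynomial.eq_zero_of_infinite_isRoot
    apply (Set.Ioi_infinite M).mono
    intro x hx
    simp only [Set.mem_setOf_eq, Polynomial.IsRoot, Polynomial.eval_sub,
        Polynomial.eval_pow, Polynomial.eval_X]
    rw [← key x hx]
    ring
  have hp : p (Fin.last k) = Polynomial.X ^ n := by
    have := sub_eq_zero.mp hzero
    exact this.symm
  have := hdeg (Fin.last k)
  rw [hp, Polynomial.natDegree_X_pow] at this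
  omega
end

section
/- Let 1 ≤ n < s be integers and let b_1, …, b_s be distinct real numbers. Then there exist real numbers a_0, a_1, …, a_s such that for all real x, x^n = a_0 + Σ_{k=1}^s a_k · (x + b_k)^s. -/
open Finset

theorem exists_sum_mul_pow_eq_of_injective {K : Type*} [Field K] {s : ℕ} {b : Fin s → K}
    (hb : Function.Injective b) (t : Fin s → K) :
    ∃ a : Fin s → K, ∀ m : Fin s, ∑ k, a k * b k ^ (m : ℕ) = t m := by
  have hV : IsUnit (Matrix.vandermonde b) :=
    (Matrix.isUnit_iff_isUnit_det _).mpr (Matrix.det_vandermonde_ne_zero_iff.mpr hb).isUnit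
  obtain ⟨a, ha⟩ := Matrix.vecMul_surjective_iff_isUnit.mpr hV t
  exact ⟨a, fun m => by simpa [Matrix.vecMul, dotProduct] using congrFun ha m⟩

theorem sum_mul_add_pow_eq {R ι : Type*} [CommSemiring R] (u : Finset ι) (a b : ι → R)
    (x : R) (s : ℕ) :
    ∑ k ∈ u, a k * (x + b k) ^ s =
      ∑ j ∈ range (s + 1), s.choose j * x ^ j * ∑ k ∈ u, a k * b k ^ (s - j) := by
  simp_rw [add_pow, mul_sum]
  rw [sum_comm]
  exact sum_congr rfl fun j _ => sum_congr rfl fun k _ => by ring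

theorem exists_pow_eq_add_sum_mul_add_pow {K : Type*} [Field K] [CharZero K] {n s : ℕ}
    (hn : 1 ≤ n) (hns : n < s) {b : Fin s → K} (hb : Function.Injective b) :
    ∃ (a0 : K) (a : Fin s → K), ∀ x : K, x ^ n = a0 + ∑ k, a k * (x + b k) ^ s := by
  -- Prescribe the moments `∑ a_k b_k^m` for `m < s` so that, in the binomial expansion,
  -- only the coefficient of `x ^ n` survives besides the constant term.
  obtain ⟨a, ha⟩ := exists_sum_mul_pow_eq_of_injective hb
    fun m => if (m : ℕ) = s - n then ((s.choose n : K))⁻¹ else 0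
  refine ⟨-∑ k, a k * b k ^ s, a, fun x => ?_⟩
  have hterm : ∀ j ∈ range s,
      (s.choose (j + 1) : K) * x ^ (j + 1) * ∑ k, a k * b k ^ (s - (j + 1)) =
        if j = n - 1 then x ^ n else 0 := by
    intro j hj
    rw [mem_range] at hj
    have hmoment := ha ⟨s - (j + 1), by omega⟩
    dsimp only at hmoment
    rw [hmoment]
    by_cases hjn : j = n - 1
    · have hchoose : (s.choose n : K) ≠ 0 := by exact_mod_cast (Nat.choose_pos hns.le).ne'
      rw [if_pos (by omega), if_pos hjn, show j + 1 = n by omega]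
      field_simp
    · rw [if_neg (by omega), if_neg hjn, mul_zero]
  rw [sum_mul_add_pow_eq, sum_range_succ', sum_congr rfl hterm, sum_ite_eq',
    if_pos (mem_range.mpr (by omega))]
  simp

theorem stmt_13 (n s : ℕ) (h1 : 1 ≤ n) (h2 : n < s) (b : Fin s → ℝ)
    (hb : Function.Injective b) :
    ∃ (a0 : ℝ) (a : Fin s → ℝ), ∀ x : ℝ,
      x ^ n = a0 + ∑ k, a k * (x + b k) ^ s :=
  exists_pow_eq_add_sum_mul_add_pow h1 h2 hb
end
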